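/- Let Γ be a distance-regular graph with diameter d and intersection numbers p_{ij}^k, and let G be a group of automorphisms of Γ all of whose vertex orbits have the same size, with n orbits; let M_i be the quotient matrix of the distance-i matrix A_i with respect to the orbit partition (so A_i H = H M_i for the characteristic matrix H of the orbit partition). Let p be a prime, q = p^m, and I ⊆ {0,1,...,d}, and suppose p divides p_{xy}^k for all k ∈ {0,1,...,d} and all x, y ∈ I. Then for any two elements B, C of the non-unital F_q-subalgebra of n × n matrices over F_q generated by the images of the matrices M_i, i ∈ I, one has B · Cᵀ = 0; hence the set of row spaces of the elements of this algebra forms a self-orthogonal subspace code in F_q^n. -/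

import Mathlib

/-!
Write `H` for the characteristic matrix of the orbit partition. Since `A_i H = H M_i` and
`H X = H Y` forces `X = Y`, the relation `A_i A_j = ∑ₖ p_{ij}^k A_k` of the distance matrices
descends to `M_i M_j = ∑ₖ p_{ij}^k M_k`, which vanishes modulo `p` for `i, j ∈ I`. Moreover
`Hᵀ H` is the scalar matrix of the common orbit size, so `Hᵀ A_i H` exhibits `M_i` as symmetric.
Hence the `F_q`-span of the images of the `M_i` is closed under transposition and has zero
products; in particular it is closed under multiplication, so it contains the generated
non-unital algebra, and `B Cᵀ = 0` for all `B, C` in it.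
-/

open Matrix Finset

section Algebra

open scoped Pointwise

variable {R A : Type*} [CommSemiring R] [Semiring A] [Algebra R A] {s : Set A}

theorem Submodule.mul_eq_zero_of_mem_span (hs : ∀ x ∈ s, ∀ y ∈ s, x * y = 0) {x y : A}
    (hx : x ∈ Submodule.span R s) (hy : y ∈ Submodule.span R s) : x * y = 0 := by
  have hss : Submodule.span R (s * s) = ⊥ := by
    rw [Submodule.span_eq_bot]
    rintro _ ⟨a, ha, b, hb, rfl⟩
    exact hs a ha b hb
  have hxy := Submodule.mul_mem_mul hx hy
  rwa [Submodule.span_mul_span, hss, Submodule.mem_bot] at hxy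

theorem NonUnitalAlgebra.mem_span_of_mem_adjoin (hs : ∀ x ∈ s, ∀ y ∈ s, x * y = 0) {x : A}
    (hx : x ∈ NonUnitalAlgebra.adjoin R s) : x ∈ Submodule.span R s :=
  NonUnitalAlgebra.adjoin_le (S := (Submodule.span R s).toNonUnitalSubalgebra
    fun a b ha hb => by rw [Submodule.mul_eq_zero_of_mem_span hs ha hb]; exact zero_mem _)
    Submodule.subset_span hx

end Algebra

namespace Matrix

variable {R m n : Type*}

theorem transpose_mem_span [Semiring R] {s : Set (Matrix n n R)} (hs : ∀ x ∈ s, xᵀ ∈ s)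
    {x : Matrix n n R} (hx : x ∈ Submodule.span R s) : xᵀ ∈ Submodule.span R s := by
  have hxT := Submodule.apply_mem_span_image_of_mem_span (transposeLinearEquiv n n R R).toLinearMap hx
  exact Submodule.span_mono (by rintro _ ⟨y, hy, rfl⟩; exact hs y hy) hxT

theorem dotProduct_eq_zero_of_mul_transpose_eq_zero [Fintype m] [Fintype n] [CommSemiring R]
    {B C : Matrix m n R} (h : B * Cᵀ = 0) {u v : n → R}
    (hu : u ∈ Submodule.span R (Set.range B)) (hv : v ∈ Submodule.span R (Set.range C)) :
    u ⬝ᵥ v = 0 := by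
  obtain ⟨x, rfl⟩ : u ∈ LinearMap.range B.vecMulLinear := by rwa [range_vecMulLinear]
  obtain ⟨y, rfl⟩ : v ∈ LinearMap.range C.vecMulLinear := by rwa [range_vecMulLinear]
  rw [vecMulLinear_apply, vecMulLinear_apply, ← C.transpose_transpose, vecMul_transpose,
    dotProduct_mulVec, vecMul_vecMul, h, vecMul_zero, zero_dotProduct]

theorem mul_eq_sum_nsmul_of_mul_eq_mul [Semiring R] [Fintype m] [Fintype n] {K : Type*}
    [Fintype K] {A : K → Matrix m m R} {M : K → Matrix n n R} {H : Matrix m n R}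
    (hH : Function.Injective fun X : Matrix n n R => H * X) (hM : ∀ k, A k * H = H * M k)
    {i j : K} {c : K → ℕ} (hA : A i * A j = ∑ k, c k • A k) :
    M i * M j = ∑ k, c k • M k := by
  apply hH
  change H * (M i * M j) = H * ∑ k, c k • M k
  rw [← Matrix.mul_assoc, ← hM, Matrix.mul_assoc, ← hM, ← Matrix.mul_assoc, hA, Matrix.sum_mul,
    Matrix.mul_sum]
  exact Finset.sum_congr rfl fun k _ => by rw [Matrix.smul_mul, Matrix.mul_smul, hM]

theorem map_intCast_mul_map_intCast_eq_zero {S : Type*} [Ring S] (p : ℕ) [CharP S p]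
    [Fintype n] [DecidableEq n] {K : Type*} [Fintype K] {M : K → Matrix n n ℤ} {i j : K} {c : K → ℕ}
    (hM : M i * M j = ∑ k, c k • M k) (hc : ∀ k, p ∣ c k) :
    (M i).map (Int.cast : ℤ → S) * (M j).map Int.cast = 0 := by
  change (M i).map (Int.castRingHom S) * (M j).map (Int.castRingHom S) = 0
  rw [← Matrix.map_mul, hM]
  change (Int.castRingHom S).mapMatrix (∑ k, c k • M k) = 0
  rw [map_sum]
  refine Finset.sum_eq_zero fun k _ => ?_
  rw [map_nsmul, ← Nat.cast_smul_eq_nsmul S, (CharP.cast_eq_zero_iff S p _).2 (hc k), zero_smul]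

end Matrix

noncomputable def SimpleGraph.distMatrix {V : Type*} (G : SimpleGraph V) (R : Type*) [Zero R]
    [One R] (i : ℕ) : Matrix V V R :=
  of fun u v => if G.dist u v = i then 1 else 0

namespace SimpleGraph

variable {V R : Type*} (G : SimpleGraph V)

theorem transpose_distMatrix [Zero R] [One R] (i : ℕ) :
    (G.distMatrix R i)ᵀ = G.distMatrix R i := by
  ext u v
  simp only [distMatrix, transpose_apply, of_apply, dist_comm]

theorem distMatrix_mul_distMatrix_apply [Fintype V] [NonAssocSemiring R] (i j : ℕ) (u v : V) :
    (G.distMatrix R i * G.distMatrix R j) u v = #{w | G.dist u w = i ∧ G.dist v w = j} := by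
  rw [mul_apply, Finset.natCast_card_filter]
  refine Finset.sum_congr rfl fun w _ => ?_
  simp only [distMatrix, of_apply, G.dist_comm (u := w), ite_zero_mul_ite_zero, mul_one]

theorem distMatrix_mul_distMatrix [Fintype V] [NonAssocSemiring R] {d : ℕ}
    (hdiam : ∀ u v, G.dist u v ≤ d) (pnum : Fin (d + 1) → Fin (d + 1) → Fin (d + 1) → ℕ)
    (hdrg : ∀ i j k : Fin (d + 1), ∀ u v : V, G.dist u v = (k : ℕ) →
      #{w | G.dist u w = (i : ℕ) ∧ G.dist v w = (j : ℕ)} = pnum i j k)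
    (i j : Fin (d + 1)) :
    G.distMatrix R i * G.distMatrix R j = ∑ k, pnum i j k • G.distMatrix R k := by
  ext u v
  let k : Fin (d + 1) := ⟨G.dist u v, Nat.lt_succ_of_le (hdiam u v)⟩
  rw [distMatrix_mul_distMatrix_apply, hdrg i j k u v rfl, Matrix.sum_apply,
    Finset.sum_eq_single k]
  · simp [k, distMatrix]
  · intro l _ hlk
    simp [distMatrix, k, Ne.symm (Fin.val_ne_of_ne hlk)]
  · simp

end SimpleGraph

def partitionMatrix {V ι : Type*} (R : Type*) [Zero R] [One R] [DecidableEq ι] (o : V → ι) :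
    Matrix V ι R :=
  of fun x j => if o x = j then 1 else 0

section PartitionMatrix

variable {R V ι : Type*} [DecidableEq ι]

theorem partitionMatrix_mul_apply [NonAssocSemiring R] [Fintype ι] {κ : Type*} (o : V → ι)
    (X : Matrix ι κ R) (x : V) (j : κ) : (partitionMatrix R o * X) x j = X (o x) j := by
  simp [partitionMatrix, mul_apply]

theorem partitionMatrix_mul_left_injective [NonAssocSemiring R] [Fintype ι] {κ : Type*}
    {o : V → ι} (ho : Function.Surjective o) :
    Function.Injective fun X : Matrix ι κ R => partitionMatrix R o * X := by
  intro X Y hXY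
  ext a j
  obtain ⟨x, rfl⟩ := ho a
  simpa only [partitionMatrix_mul_apply] using congr_fun₂ hXY x j

theorem transpose_partitionMatrix_mul_partitionMatrix [NonAssocSemiring R] [Fintype V]
    (o : V → ι) :
    (partitionMatrix R o)ᵀ * partitionMatrix R o = diagonal fun j => (#{x | o x = j} : R) := by
  ext a b
  simp only [mul_apply, diagonal_apply, partitionMatrix, transpose_apply, of_apply,
    ite_zero_mul_ite_zero, mul_one]
  split_ifs with hab
  · simp [hab]
  · exact Finset.sum_eq_zero fun x _ => if_neg fun h => hab (h.1.symm.trans h.2)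

theorem transpose_eq_self_of_mul_partitionMatrix [CommRing R] [IsDomain R] [CharZero R]
    [Fintype V] [Fintype ι] {o : V → ι} (ho : Function.Surjective o)
    (hsize : ∀ a b, #{x | o x = a} = #{x | o x = b}) {A : Matrix V V R} {M : Matrix ι ι R}
    (hA : Aᵀ = A) (hM : A * partitionMatrix R o = partitionMatrix R o * M) : Mᵀ = M := by
  set D : Matrix ι ι R := diagonal fun j => (#{x | o x = j} : R)
  have hD : D * M = (partitionMatrix R o)ᵀ * A * partitionMatrix R o := by
    rw [Matrix.mul_assoc, hM, ← Matrix.mul_assoc, transpose_partitionMatrix_mul_partitionMatrix]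
  have hDT : Mᵀ * D = D * M :=
    calc Mᵀ * D = (D * M)ᵀ := by rw [transpose_mul, show Dᵀ = D from diagonal_transpose _]
      _ = D * M := by
        rw [hD, transpose_mul, transpose_mul, transpose_transpose, hA, Matrix.mul_assoc]
  ext a b
  have hab := congr_fun₂ hDT b a
  simp only [D, mul_diagonal, diagonal_mul, transpose_apply, hsize a b] at hab
  have hcard : (#{x | o x = b} : R) ≠ 0 := by
    obtain ⟨x, rfl⟩ := ho b
    exact Nat.cast_ne_zero.mpr (Finset.card_pos.mpr ⟨x, by simp⟩).ne'
  exact (mul_right_cancel₀ hcard (hab.trans (mul_comm _ _))).symm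

end PartitionMatrix

theorem drg_quotient_algebra_row_spaces_self_orthogonal_subspace_code_general
    {V : Type*} [Fintype V]
    (G : SimpleGraph V)
    (d : ℕ) (hdiam : ∀ u v, G.dist u v ≤ d)
    (pnum : Fin (d + 1) → Fin (d + 1) → Fin (d + 1) → ℕ)
    (hdrg : ∀ i j k : Fin (d + 1), ∀ u v : V, G.dist u v = (k : ℕ) →
      (Finset.univ.filter fun w => G.dist u w = (i : ℕ) ∧ G.dist v w = (j : ℕ)).card
        = pnum i j k)
    (p m n : ℕ) [Fact p.Prime]
    -- the orbit partition: `o x` is the index of the orbit of `x`, there are `n` orbits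
    (o : V → Fin n) (ho : Function.Surjective o)
    -- all orbits have the same size
    (hsize : ∀ j₁ j₂ : Fin n, (Finset.univ.filter fun x => o x = j₁).card
        = (Finset.univ.filter fun x => o x = j₂).card)
    -- the quotient matrices of the distance matrices with respect to the orbit partition
    (M : Fin (d + 1) → Matrix (Fin n) (Fin n) ℤ)
    (hM : ∀ i : Fin (d + 1),
      (Matrix.of fun u v => if G.dist u v = (i : ℕ) then (1 : ℤ) else 0)
          * (Matrix.of fun x j => if o x = j then (1 : ℤ) else 0)
        = (Matrix.of fun x j => if o x = j then (1 : ℤ) else 0) * M i)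
    (I : Set (Fin (d + 1)))
    (hdiv : ∀ x ∈ I, ∀ y ∈ I, ∀ k, p ∣ pnum x y k) :
    ∀ B ∈ NonUnitalAlgebra.adjoin (GaloisField p m)
        ((fun i => (M i).map (Int.cast : ℤ → GaloisField p m)) '' I),
    ∀ C ∈ NonUnitalAlgebra.adjoin (GaloisField p m)
        ((fun i => (M i).map (Int.cast : ℤ → GaloisField p m)) '' I),
      B * Cᵀ = 0 ∧
      ∀ u ∈ Submodule.span (GaloisField p m) (Set.range fun r => B r),
      ∀ v ∈ Submodule.span (GaloisField p m) (Set.range fun r => C r),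
        u ⬝ᵥ v = 0 := by
  have hM_mul : ∀ i j, M i * M j = ∑ k, pnum i j k • M k := fun i j =>
    mul_eq_sum_nsmul_of_mul_eq_mul (partitionMatrix_mul_left_injective ho) hM
      (G.distMatrix_mul_distMatrix hdiam pnum hdrg i j)
  have hM_symm : ∀ i, (M i)ᵀ = M i := fun i =>
    transpose_eq_self_of_mul_partitionMatrix ho hsize (G.transpose_distMatrix i) (hM i)
  set s := (fun i => (M i).map (Int.cast : ℤ → GaloisField p m)) '' I
  have hs_mul : ∀ x ∈ s, ∀ y ∈ s, x * y = 0 := by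
    rintro _ ⟨i, hi, rfl⟩ _ ⟨j, hj, rfl⟩
    exact map_intCast_mul_map_intCast_eq_zero p (hM_mul i j) (hdiv i hi j hj)
  have hs_transpose : ∀ x ∈ s, xᵀ ∈ s := by
    rintro _ ⟨i, hi, rfl⟩
    exact ⟨i, hi, by rw [← transpose_map, hM_symm]⟩
  intro B hB C hC
  have hBC : B * Cᵀ = 0 := Submodule.mul_eq_zero_of_mem_span hs_mul
    (NonUnitalAlgebra.mem_span_of_mem_adjoin hs_mul hB)
    (transpose_mem_span hs_transpose (NonUnitalAlgebra.mem_span_of_mem_adjoin hs_mul hC))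
  exact ⟨hBC, fun u hu v hv => dotProduct_eq_zero_of_mul_transpose_eq_zero hBC hu hv⟩

/-- Let `Γ` be a distance-regular graph of diameter `d` with intersection
numbers `p i j k`, and let a group of automorphisms act on `Γ` with `n` orbits, all of
the same size, with quotient matrices `M i` of the distance matrices.  Let `p` be a
prime, `q = p ^ m`, and `I ⊆ {0, …, d}` with `p ∣ p x y k` for all `k` and all
`x, y ∈ I`.  Then any two elements `B, C` of the non-unital `F_q`-subalgebra generated
by the images of the `M i`, `i ∈ I`, satisfy `B * Cᵀ = 0`; hence the row spaces of the
elements of this algebra form a self-orthogonal subspace code in `F_q^n`. -/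
theorem drg_quotient_algebra_row_spaces_self_orthogonal_subspace_code
    {V : Type*} [Fintype V] [DecidableEq V]
    (G : SimpleGraph V) (hconn : G.Connected)
    (d : ℕ) (hdiam : ∀ u v, G.dist u v ≤ d) (hdiam' : ∃ u v, G.dist u v = d)
    (pnum : Fin (d + 1) → Fin (d + 1) → Fin (d + 1) → ℕ)
    (hdrg : ∀ i j k : Fin (d + 1), ∀ u v : V, G.dist u v = (k : ℕ) →
      (Finset.univ.filter fun w => G.dist u w = (i : ℕ) ∧ G.dist v w = (j : ℕ)).card
        = pnum i j k)
    (p m n : ℕ) [Fact p.Prime] (hm : 0 < m)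
    -- a group of automorphisms of the graph
    (S : Subgroup (Equiv.Perm V))
    (hS : ∀ g ∈ S, ∀ u v : V, G.Adj (g u) (g v) ↔ G.Adj u v)
    -- the orbit partition: `o x` is the index of the orbit of `x`, there are `n` orbits
    (o : V → Fin n) (ho : Function.Surjective o)
    (horb : ∀ u v : V, o u = o v ↔ ∃ g ∈ S, g u = v)
    -- all orbits have the same size
    (hsize : ∀ j₁ j₂ : Fin n, (Finset.univ.filter fun x => o x = j₁).card
        = (Finset.univ.filter fun x => o x = j₂).card)
    -- the quotient matrices of the distance matrices with respect to the orbit partition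
    (M : Fin (d + 1) → Matrix (Fin n) (Fin n) ℤ)
    (hM : ∀ i : Fin (d + 1),
      (Matrix.of fun u v => if G.dist u v = (i : ℕ) then (1 : ℤ) else 0)
          * (Matrix.of fun x j => if o x = j then (1 : ℤ) else 0)
        = (Matrix.of fun x j => if o x = j then (1 : ℤ) else 0) * M i)
    (I : Set (Fin (d + 1)))
    (hdiv : ∀ x ∈ I, ∀ y ∈ I, ∀ k, p ∣ pnum x y k) :
    ∀ B ∈ NonUnitalAlgebra.adjoin (GaloisField p m)
        ((fun i => (M i).map (Int.cast : ℤ → GaloisField p m)) '' I),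
    ∀ C ∈ NonUnitalAlgebra.adjoin (GaloisField p m)
        ((fun i => (M i).map (Int.cast : ℤ → GaloisField p m)) '' I),
      B * Cᵀ = 0 ∧
      ∀ u ∈ Submodule.span (GaloisField p m) (Set.range fun r => B r),
      ∀ v ∈ Submodule.span (GaloisField p m) (Set.range fun r => C r),
        u ⬝ᵥ v = 0 :=
  drg_quotient_algebra_row_spaces_self_orthogonal_subspace_code_general G d hdiam pnum hdrg p m n o
    ho hsize M hM I hdiv
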